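/- arXiv:1303.1829 — 2 statements merged into one kernel-verified Lean document; each statement's English description precedes it below -/
import Mathlib

section
/- An edge is invariant under the opening γ_e exactly when it is a lowest edge of one of its extremities: for adjacent vertices i, j, one has (γ_e e) i j = e i j if and only if e i j = (ε_ne e) i or e i j = (ε_ne e) j; otherwise (γ_e e) i j < e i j. -/
/-- The erosion from edge weights to node weights:
`(ε_ne e) i` is the minimum of `e i j` over the neighbors `j` of `i`. -/
noncomputable def epsNE {V : Type*} [Fintype V] (G : SimpleGraph V) [DecidableRel G.Adj]
    (h : ∀ i : V, ∃ j, G.Adj i j) (e : V → V → ℝ) (i : V) : ℝ :=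
  (G.neighborFinset i).inf'
    ⟨(h i).choose, by rw [SimpleGraph.mem_neighborFinset]; exact (h i).choose_spec⟩
    (fun j => e i j)

/-- The opening `γ_e = δ_en ∘ ε_ne` on edge weights:
`(γ_e e) i j = max ((ε_ne e) i) ((ε_ne e) j)`. -/
noncomputable def gammaE {V : Type*} [Fintype V] (G : SimpleGraph V) [DecidableRel G.Adj]
    (h : ∀ i : V, ∃ j, G.Adj i j) (e : V → V → ℝ) (i j : V) : ℝ :=
  max (epsNE G h e i) (epsNE G h e j)

theorem max_eq_iff_of_le {α : Type*} [LinearOrder α] {a b c : α} (ha : a ≤ c) (hb : b ≤ c) :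
    max a b = c ↔ c = a ∨ c = b := by
  rw [max_eq_iff]
  constructor
  · rintro (⟨rfl, -⟩ | ⟨rfl, -⟩)
    exacts [Or.inl rfl, Or.inr rfl]
  · rintro (rfl | rfl)
    exacts [Or.inl ⟨rfl, hb⟩, Or.inr ⟨rfl, ha⟩]

section Opening

variable {V : Type*} [Fintype V] (G : SimpleGraph V) [DecidableRel G.Adj]
  (h : ∀ i : V, ∃ j, G.Adj i j) (e : V → V → ℝ)

theorem epsNE_le_of_adj {i j : V} (hij : G.Adj i j) : epsNE G h e i ≤ e i j :=
  Finset.inf'_le _ ((G.mem_neighborFinset i j).mpr hij)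

variable {G e}

theorem epsNE_right_le_of_adj (hsymm : ∀ i j, G.Adj i j → e i j = e j i) {i j : V}
    (hij : G.Adj i j) : epsNE G h e j ≤ e i j :=
  hsymm i j hij ▸ epsNE_le_of_adj G h e hij.symm

theorem gammaE_le_of_adj (hsymm : ∀ i j, G.Adj i j → e i j = e j i) {i j : V}
    (hij : G.Adj i j) : gammaE G h e i j ≤ e i j :=
  max_le (epsNE_le_of_adj G h e hij) (epsNE_right_le_of_adj h hsymm hij)

theorem gammaE_eq_iff_of_adj (hsymm : ∀ i j, G.Adj i j → e i j = e j i) {i j : V}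
    (hij : G.Adj i j) :
    gammaE G h e i j = e i j ↔ e i j = epsNE G h e i ∨ e i j = epsNE G h e j :=
  max_eq_iff_of_le (epsNE_le_of_adj G h e hij) (epsNE_right_le_of_adj h hsymm hij)

end Opening

/-- An edge is invariant under the opening `γ_e` exactly when it is a lowest edge of
one of its extremities; otherwise its weight is strictly lowered by the opening. -/
theorem gammaE_invariant_iff_lowest_edge {V : Type*} [Fintype V] (G : SimpleGraph V)
    [DecidableRel G.Adj] (h : ∀ i : V, ∃ j, G.Adj i j)
    (e : V → V → ℝ) (hsymm : ∀ i j, G.Adj i j → e i j = e j i) :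
    ∀ i j, G.Adj i j →
      ((gammaE G h e i j = e i j ↔ (e i j = epsNE G h e i ∨ e i j = epsNE G h e j)) ∧
       (¬ (e i j = epsNE G h e i ∨ e i j = epsNE G h e j) → gammaE G h e i j < e i j)) := by
  intro i j hij
  have hinvariant := gammaE_eq_iff_of_adj h hsymm hij
  exact ⟨hinvariant, fun hlowest =>
    (gammaE_le_of_adj h hsymm hij).lt_of_ne (mt hinvariant.mp hlowest)⟩
end

section
/- Any node-weighted graph without isolated regional minima becomes a flooding graph when each edge receives the maximum of the weights of its extremities: if every vertex i of (G, n) has at least one neighbor j with n j ≤ n i, then, setting e = δ_en n (i.e. e i j = max (n i) (n j) for adjacent i, j), the pair (n, e) is a flooding graph on G. -/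
/-- `(n, e)` is a flooding graph on `G`: each edge carries the maximum of the weights of
its extremities and each node carries the minimum weight of its adjacent edges. -/
def IsFloodingGraph {V : Type*} [Fintype V] (G : SimpleGraph V) [DecidableRel G.Adj]
    (h : ∀ i : V, ∃ j, G.Adj i j) (n : V → ℝ) (e : V → V → ℝ) : Prop :=
  (∀ i j, G.Adj i j → e i j = max (n i) (n j)) ∧ (∀ i, n i = epsNE G h e i)

section Erosion

variable {V : Type*} [Fintype V] {G : SimpleGraph V} [DecidableRel G.Adj]
  (h : ∀ i : V, ∃ j, G.Adj i j)

theorem epsNE_le {e : V → V → ℝ} {i j : V} (hij : G.Adj i j) : epsNE G h e i ≤ e i j :=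
  Finset.inf'_le _ ((G.mem_neighborFinset i j).mpr hij)

theorem le_epsNE_iff {e : V → V → ℝ} {i : V} {a : ℝ} :
    a ≤ epsNE G h e i ↔ ∀ j, G.Adj i j → a ≤ e i j :=
  ⟨fun ha _ hij => ha.trans (epsNE_le h hij),
    fun ha => Finset.le_inf' _ _ fun j hj => ha j ((G.mem_neighborFinset i j).mp hj)⟩

theorem epsNE_max_eq_of_adj_of_le {n : V → ℝ} {i j : V} (hij : G.Adj i j) (hji : n j ≤ n i) :
    epsNE G h (fun i j => max (n i) (n j)) i = n i :=
  le_antisymm ((epsNE_le h hij).trans (max_le le_rfl hji))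
    ((le_epsNE_iff h).mpr fun _ _ => le_max_left _ _)

end Erosion

/-- A node-weighted graph without isolated regional minima becomes a flooding graph
when each edge receives the maximum of the weights of its extremities: if every vertex
has a neighbor with node weight not larger than its own, then `(n, δ_en n)` is a
flooding graph on `G`. -/
theorem nodeWeighted_to_flooding {V : Type*} [Fintype V] (G : SimpleGraph V)
    [DecidableRel G.Adj] (h : ∀ i : V, ∃ j, G.Adj i j)
    (n : V → ℝ) (hmin : ∀ i, ∃ j, G.Adj i j ∧ n j ≤ n i) :
    IsFloodingGraph G h n (fun i j => max (n i) (n j)) := by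
  refine ⟨fun _ _ _ => rfl, fun i => ?_⟩
  obtain ⟨j, hij, hji⟩ := hmin i
  exact (epsNE_max_eq_of_adj_of_le h hij hji).symm
end
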